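/- arXiv:2505.13499 — 2 statements merged into one kernel-verified Lean document; each statement's English description precedes it below -/
import Mathlib

section
/- The softmax function softmax : ℝ^c → ℝ^c, softmax(z) = exp(z)/(𝟙ᵀ exp(z)), is Lipschitz continuous with Lipschitz constant 1 with respect to the Euclidean norm. -/
/-!
With `p = softmax z`, the Jacobian of softmax at `z` is `diag p - p pᵀ`, which sends `v` to
`(pᵢ (vᵢ - m))ᵢ` with `m = ∑ⱼ pⱼ vⱼ`. Since `0 ≤ pᵢ ≤ 1`,
`∑ pᵢ² (vᵢ - m)² ≤ ∑ pᵢ (vᵢ - m)² = ∑ pᵢ vᵢ² - m² ≤ ‖v‖²`, so the Jacobian has operator norm at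
most `1` everywhere and the mean value inequality concludes.
-/

/-- The softmax function on `ℝ^c`. -/
noncomputable def softmax {c : ℕ} (z : EuclideanSpace ℝ (Fin c)) : EuclideanSpace ℝ (Fin c) :=
  (EuclideanSpace.equiv (Fin c) ℝ).symm (fun i => Real.exp (z i) / ∑ j, Real.exp (z j))

open Matrix Finset Real

section Jacobian

variable {ι : Type*} [Fintype ι] {p : ι → ℝ}

theorem sum_sq_mul_sub_weightedMean_le (hp : ∀ i, 0 ≤ p i) (hp_sum : ∑ i, p i ≤ 1)
    (v : ι → ℝ) : ∑ i, (p i * (v i - ∑ j, p j * v j)) ^ 2 ≤ ∑ i, v i ^ 2 := by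
  set m := ∑ j, p j * v j with hm
  have hp_le : ∀ i, p i ≤ 1 := fun i =>
    (single_le_sum (fun j _ => hp j) (mem_univ i)).trans hp_sum
  have variance_eq :
      ∑ i, p i * (v i - m) ^ 2 = ∑ i, p i * v i ^ 2 - (2 - ∑ i, p i) * m ^ 2 := by
    have expand : ∀ i, p i * (v i - m) ^ 2 = p i * v i ^ 2 - 2 * m * (p i * v i) + m ^ 2 * p i :=
      fun i => by ring
    simp only [expand, sum_add_distrib, sum_sub_distrib, ← mul_sum, ← hm]
    ring
  calc ∑ i, (p i * (v i - m)) ^ 2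
      ≤ ∑ i, p i * (v i - m) ^ 2 := by
        gcongr with i
        rw [mul_pow, sq (p i)]
        exact mul_le_mul_of_nonneg_right (mul_le_of_le_one_left (hp i) (hp_le i)) (sq_nonneg _)
    _ ≤ ∑ i, p i * v i ^ 2 := by
        rw [variance_eq]
        nlinarith [sq_nonneg m]
    _ ≤ ∑ i, v i ^ 2 := by
        gcongr with i
        exact mul_le_of_le_one_left (sq_nonneg _) (hp_le i)

variable [DecidableEq ι]

theorem toEuclideanCLM_diagonal_sub_vecMulVec_apply (v : EuclideanSpace ℝ ι) (i : ι) :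
    toEuclideanCLM (𝕜 := ℝ) (diagonal p - vecMulVec p p) v i = p i * (v i - ∑ j, p j * v j) := by
  simp [mulVec_diagonal, vecMulVec_mulVec, dotProduct, mul_sub, mul_comm]

theorem norm_toEuclideanCLM_diagonal_sub_vecMulVec_le_one (hp : ∀ i, 0 ≤ p i)
    (hp_sum : ∑ i, p i ≤ 1) : ‖toEuclideanCLM (𝕜 := ℝ) (diagonal p - vecMulVec p p)‖ ≤ 1 := by
  refine ContinuousLinearMap.opNorm_le_bound _ zero_le_one fun v => ?_
  rw [one_mul, ← sq_le_sq₀ (norm_nonneg _) (norm_nonneg _), EuclideanSpace.norm_sq_eq,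
    EuclideanSpace.norm_sq_eq]
  simpa only [toEuclideanCLM_diagonal_sub_vecMulVec_apply, Real.norm_eq_abs, sq_abs] using
    sum_sq_mul_sub_weightedMean_le hp hp_sum v

end Jacobian

section Softmax

variable {c : ℕ}

theorem softmax_apply (z : EuclideanSpace ℝ (Fin c)) (i : Fin c) :
    softmax z i = exp (z i) / ∑ j, exp (z j) := rfl

theorem softmax_nonneg (z : EuclideanSpace ℝ (Fin c)) (i : Fin c) : 0 ≤ softmax z i := by
  rw [softmax_apply]
  positivity

theorem sum_softmax_le_one (z : EuclideanSpace ℝ (Fin c)) : ∑ i, softmax z i ≤ 1 := by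
  simp only [softmax_apply, ← sum_div]
  exact div_self_le_one _

theorem softmax_apply_eq_exp_sub_log (z : EuclideanSpace ℝ (Fin c)) (i : Fin c) :
    softmax z i = exp (z i - log (∑ j, exp (z j))) := by
  have hpos : 0 < ∑ j, exp (z j) := sum_pos (fun j _ => exp_pos (z j)) ⟨i, mem_univ i⟩
  rw [softmax_apply, exp_sub, exp_log hpos]

theorem hasFDerivAt_softmax_apply (z : EuclideanSpace ℝ (Fin c)) (i : Fin c) :
    HasFDerivAt (fun x => softmax x i)
      (softmax z i • (PiLp.proj 2 (𝕜 := ℝ) (fun _ : Fin c => ℝ) i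
        - ∑ j, softmax z j • PiLp.proj 2 (𝕜 := ℝ) (fun _ : Fin c => ℝ) j)) z := by
  have hexp : ∀ j, HasFDerivAt (fun x : EuclideanSpace ℝ (Fin c) => exp (x j))
      (exp (z j) • PiLp.proj 2 (fun _ => ℝ) j) z := fun j =>
    (PiLp.hasFDerivAt_apply 2 z j).exp
  have hsum := HasFDerivAt.fun_sum (u := univ) fun j _ => hexp j
  have hpos : 0 < ∑ j, exp (z j) := sum_pos (fun j _ => exp_pos (z j)) ⟨i, mem_univ i⟩
  rw [funext fun x => softmax_apply_eq_exp_sub_log x i]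
  refine (((PiLp.hasFDerivAt_apply 2 z i).fun_sub (hsum.log hpos.ne')).exp).congr_fderiv ?_
  rw [← softmax_apply_eq_exp_sub_log, smul_sum]
  simp only [smul_smul, softmax_apply, div_eq_inv_mul]

noncomputable def softmaxJacobian (z : EuclideanSpace ℝ (Fin c)) : Matrix (Fin c) (Fin c) ℝ :=
  diagonal (softmax z).ofLp - vecMulVec (softmax z).ofLp (softmax z).ofLp

theorem hasFDerivAt_softmax (z : EuclideanSpace ℝ (Fin c)) :
    HasFDerivAt softmax (toEuclideanCLM (𝕜 := ℝ) (softmaxJacobian z)) z := by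
  refine hasFDerivWithinAt_univ.mp <| hasFDerivWithinAt_euclidean.mpr fun i =>
    ((hasFDerivAt_softmax_apply z i).congr_fderiv ?_).hasFDerivWithinAt
  ext v
  rw [ContinuousLinearMap.comp_apply, PiLp.proj_apply, softmaxJacobian,
    toEuclideanCLM_diagonal_sub_vecMulVec_apply]
  simp [mul_sub, mul_sum]

end Softmax

theorem softmax_lipschitz_one {c : ℕ} :
    LipschitzWith 1 (softmax (c := c)) :=
  lipschitzWith_of_nnnorm_fderiv_le (fun z => (hasFDerivAt_softmax z).differentiableAt) fun z => by
    rw [(hasFDerivAt_softmax z).fderiv, ← NNReal.coe_le_coe, coe_nnnorm, NNReal.coe_one]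
    exact norm_toEuclideanCLM_diagonal_sub_vecMulVec_le_one (softmax_nonneg z)
      (sum_softmax_le_one z)
end

section
/- Under the constant-velocity optimal dynamics X(t) = X(T) + ((T−t)/λ) ∇ₓG(X(T), y) with G(·, y) convex and C¹ and λ > 0, trajectories with distinct terminal states X_T ≠ X̃_T (and the same target y) never intersect: for all t ∈ [0, T], X_T + ((T−t)/λ)∇ₓG(X_T, y) ≠ X̃_T + ((T−t)/λ)∇ₓG(X̃_T, y). -/
/-!
For `c ≥ 0` the map `x ↦ x + c • ∇g x` is the gradient of the strictly convex function
`½‖x‖² + c g`, hence injective. Concretely: the gradient of a convex function is a monotone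
operator, `0 ≤ ⟪∇g x - ∇g y, x - y⟫`, as one sees by restricting `g` to the segment from `y`
to `x`, where its derivative is nondecreasing. Therefore
`⟪(x + c • ∇g x) - (y + c • ∇g y), x - y⟫ ≥ ‖x - y‖²`, so distinct points have distinct images.
-/

open Set InnerProductSpace

section Gradient

variable {E : Type*} [NormedAddCommGroup E] [InnerProductSpace ℝ E]

theorem HasGradientAt.hasDerivAt_comp_lineMap [CompleteSpace E] {f : E → ℝ} {f' x y : E} {s : ℝ}
    (hf : HasGradientAt f f' (AffineMap.lineMap y x s)) :
    HasDerivAt (f ∘ AffineMap.lineMap y x) ⟪f', x - y⟫_ℝ s := by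
  simpa using hf.hasFDerivAt.comp_hasDerivAt s AffineMap.hasDerivAt_lineMap

theorem ConvexOn.inner_gradient_sub_nonneg [CompleteSpace E] {f : E → ℝ} {f' : E → E}
    (hconv : ConvexOn ℝ univ f) (hgrad : ∀ x, HasGradientAt f (f' x) x) (x y : E) :
    0 ≤ ⟪f' x - f' y, x - y⟫_ℝ := by
  have hderiv (s : ℝ) := (hgrad (AffineMap.lineMap y x s)).hasDerivAt_comp_lineMap
  have hmono : deriv (f ∘ AffineMap.lineMap (k := ℝ) y x) 0 ≤
      deriv (f ∘ AffineMap.lineMap (k := ℝ) y x) 1 :=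
    (hconv.comp_affineMap _).monotoneOn_deriv (fun s _ => (hderiv s).differentiableAt)
      (mem_univ _) (mem_univ _) zero_le_one
  rw [(hderiv 0).deriv, (hderiv 1).deriv, AffineMap.lineMap_apply_zero,
    AffineMap.lineMap_apply_one] at hmono
  rw [inner_sub_left]
  linarith

theorem injective_add_smul_of_inner_sub_nonneg {F : E → E}
    (hF : ∀ x y, 0 ≤ ⟪F x - F y, x - y⟫_ℝ) {c : ℝ} (hc : 0 ≤ c) :
    Function.Injective fun x => x + c • F x := by
  intro x y hxy
  have hdiff : x - y = -(c • (F x - F y)) := by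
    simp only at hxy
    rw [smul_sub]
    linear_combination (norm := module) hxy
  have hnorm : ‖x - y‖ ^ 2 ≤ 0 := by
    calc ‖x - y‖ ^ 2 = ⟪x - y, x - y⟫_ℝ := (real_inner_self_eq_norm_sq _).symm
      _ = -(c * ⟪F x - F y, x - y⟫_ℝ) := by
        nth_rewrite 1 [hdiff]
        rw [inner_neg_left, real_inner_smul_left]
      _ ≤ 0 := neg_nonpos.mpr (mul_nonneg hc (hF x y))
  rw [← sub_eq_zero, ← norm_eq_zero]
  exact pow_eq_zero_iff two_ne_zero |>.mp (hnorm.antisymm (sq_nonneg _))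

end Gradient

theorem trajectories_never_intersect_general {m : ℕ} (T lam : ℝ) (hlam : 0 < lam)
    (g : EuclideanSpace ℝ (Fin m) → ℝ)
    (g' : EuclideanSpace ℝ (Fin m) → EuclideanSpace ℝ (Fin m))
    (hconv : ConvexOn ℝ Set.univ g)
    (hgrad : ∀ x, HasGradientAt g (g' x) x)
    (XT XT' : EuclideanSpace ℝ (Fin m)) (hne : XT ≠ XT')
    (t : ℝ) (ht : t ∈ Set.Icc (0 : ℝ) T) :
    XT + ((T - t) / lam) • g' XT ≠ XT' + ((T - t) / lam) • g' XT' := by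
  have hc : 0 ≤ (T - t) / lam := div_nonneg (sub_nonneg.mpr ht.2) hlam.le
  exact (injective_add_smul_of_inner_sub_nonneg
    (hconv.inner_gradient_sub_nonneg hgrad) hc).ne hne

theorem trajectories_never_intersect {m : ℕ} (T lam : ℝ) (hlam : 0 < lam)
    (g : EuclideanSpace ℝ (Fin m) → ℝ)
    (g' : EuclideanSpace ℝ (Fin m) → EuclideanSpace ℝ (Fin m))
    (hconv : ConvexOn ℝ Set.univ g) (hC1 : ContDiff ℝ 1 g)
    (hgrad : ∀ x, HasGradientAt g (g' x) x)
    (XT XT' : EuclideanSpace ℝ (Fin m)) (hne : XT ≠ XT')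
    (t : ℝ) (ht : t ∈ Set.Icc (0 : ℝ) T) :
    XT + ((T - t) / lam) • g' XT ≠ XT' + ((T - t) / lam) • g' XT' :=
  trajectories_never_intersect_general T lam hlam g g' hconv hgrad XT XT' hne t ht
end
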